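/- Let g = [[α,X,Y],[E,A,B],[F,0,D]] be a (2l+1)×(2l+1) matrix over 𝔽_q (blocks of sizes 1, l, l, with the lower-middle l×l block equal to 0) satisfying ᵀg·β·g = β with β = [[2,0,0],[0,0,I_l],[0,I_l,0]]. Then X = 0 and ᵀA·D = I_l (so D = ᵀA⁻¹). -/

import Mathlib

/-!
Restricting the form `gᵀ β g = β` to the last `2l` coordinates gives
`2 (X | Y)ᵀ (X | Y) + Hᵀ J H = J`, where `H = [[A, B], [0, D]]` and `J = [[0, 1], [1, 0]]`.
The upper-left block reads `2 Xᵀ X = 0`; since `X` is a single row, the diagonal entries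
of `Xᵀ X` are the squares `X₀ⱼ²`, so `X = 0` in odd characteristic. The upper-right block
then reads `Aᵀ D = 1`.
-/

open Matrix

namespace Matrix

variable {R : Type*}

theorem eq_zero_of_transpose_mul_self_eq_zero_of_unique {m n : Type*} [Unique m] [Fintype m]
    [CommSemiring R] [NoZeroDivisors R] {X : Matrix m n R} (h : Xᵀ * X = 0) : X = 0 := by
  ext i j
  have hjj := congrFun (congrFun h j) j
  rw [mul_apply, Fintype.sum_unique, transpose_apply, Subsingleton.elim default i] at hjj
  exact mul_self_eq_zero.mp hjj

theorem toBlocks₂₂_transpose_mul_fromBlocks_diag_mul {m n : Type*} [Fintype m] [Fintype n]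
    [CommSemiring R] (a : Matrix m m R) (b : Matrix m n R) (c : Matrix n m R) (d : Matrix n n R)
    (β₁ : Matrix m m R) (β₂ : Matrix n n R) :
    toBlocks₂₂ ((fromBlocks a b c d)ᵀ * fromBlocks β₁ 0 0 β₂ * fromBlocks a b c d) =
      bᵀ * β₁ * b + dᵀ * β₂ * d := by
  simp only [fromBlocks_transpose, fromBlocks_multiply, toBlocks_fromBlocks₂₂,
    Matrix.mul_zero, add_zero, zero_add]

theorem transpose_fromCols_mul_mul_fromCols {m n₁ n₂ : Type*} [Fintype m] [CommSemiring R]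
    (X : Matrix m n₁ R) (Y : Matrix m n₂ R) (M : Matrix m m R) :
    (fromCols X Y)ᵀ * M * fromCols X Y =
      fromBlocks (Xᵀ * M * X) (Xᵀ * M * Y) (Yᵀ * M * X) (Yᵀ * M * Y) := by
  rw [transpose_fromCols, fromRows_mul, fromRows_mul, mul_fromCols, mul_fromCols,
    fromRows_fromCols_eq_fromBlocks]

theorem transpose_mul_hyperbolic_mul_upperTriangular {n : Type*} [Fintype n] [DecidableEq n]
    [CommSemiring R] (A B D : Matrix n n R) :
    (fromBlocks A B 0 D)ᵀ * fromBlocks 0 1 1 0 * fromBlocks A B 0 D =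
      fromBlocks 0 (Aᵀ * D) (Dᵀ * A) (Dᵀ * B + Bᵀ * D) := by
  simp only [fromBlocks_transpose, fromBlocks_multiply, transpose_zero, Matrix.mul_zero,
    Matrix.zero_mul, Matrix.mul_one, add_zero, zero_add]

end Matrix

theorem stmt_13_general (K : Type*) [Field K] (hchar : ringChar K ≠ 2)
    (l : ℕ) (α : K)
    (X Y : Matrix (Fin 1) (Fin l) K)
    (E Fm : Matrix (Fin l) (Fin 1) K)
    (A B D : Matrix (Fin l) (Fin l) K)
    (β g : Matrix (Fin 1 ⊕ (Fin l ⊕ Fin l)) (Fin 1 ⊕ (Fin l ⊕ Fin l)) K)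
    (hβ : β = fromBlocks (Matrix.diagonal fun _ => (2 : K)) 0 0 (fromBlocks 0 1 1 0))
    (hg : g = fromBlocks (Matrix.diagonal fun _ => α) (fromCols X Y)
      (fromRows E Fm) (fromBlocks A B 0 D))
    (horth : gᵀ * β * g = β) :
    X = 0 ∧ Aᵀ * D = 1 := by
  subst hβ hg
  have hlower := congrArg toBlocks₂₂ horth
  rw [toBlocks₂₂_transpose_mul_fromBlocks_diag_mul, toBlocks_fromBlocks₂₂,
    transpose_fromCols_mul_mul_fromCols, transpose_mul_hyperbolic_mul_upperTriangular,
    fromBlocks_add] at hlower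
  obtain ⟨hXX, hAD, -, -⟩ := fromBlocks_inj.mp hlower
  have hX : X = 0 := by
    rw [add_zero, Matrix.mul_assoc, ← smul_eq_diagonal_mul, Matrix.mul_smul,
      smul_eq_zero] at hXX
    exact eq_zero_of_transpose_mul_self_eq_zero_of_unique
      (hXX.resolve_left (Ring.two_ne_zero hchar))
  subst hX
  simpa using hAD

/-- for `g = [[α,X,Y],[E,A,B],[F,0,D]] ∈ O(2l+1,q)` one has
`X = 0` and `ᵀA·D = I`. -/
theorem stmt_13 (K : Type*) [Field K] [Fintype K] (hchar : ringChar K ≠ 2)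
    (l : ℕ) (hl : 2 ≤ l) (α : K)
    (X Y : Matrix (Fin 1) (Fin l) K)
    (E Fm : Matrix (Fin l) (Fin 1) K)
    (A B D : Matrix (Fin l) (Fin l) K)
    (β g : Matrix (Fin 1 ⊕ (Fin l ⊕ Fin l)) (Fin 1 ⊕ (Fin l ⊕ Fin l)) K)
    (hβ : β = fromBlocks (Matrix.diagonal fun _ => (2 : K)) 0 0 (fromBlocks 0 1 1 0))
    (hg : g = fromBlocks (Matrix.diagonal fun _ => α) (fromCols X Y)
      (fromRows E Fm) (fromBlocks A B 0 D))
    (horth : gᵀ * β * g = β) :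
    X = 0 ∧ Aᵀ * D = 1 :=
  stmt_13_general K hchar l α X Y E Fm A B D β g hβ hg horth
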